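/- Let 0 < t < 2 be real, set z := t/√(1 − t/2), m := (2z)^{−1/2}, Λ := m⁻³, and u₃ := −m²·(2t − t²/4) − (3/8)mΛ. Then (512u₃ − Λ² + 96mΛ)² = Λ(64m + Λ)³. Consequently (combining with the N_f = 3 singularity criterion) g₂(u₃)³ = 27·g₃(u₃)² for the equal-mass N_f = 3 Weierstrass invariants, i.e. u₃ is a singular point of the curve. -/
import Mathlib

/-- equal-mass `N_f = 3` monopole singularity. For `0 < t < 2`,
with `z = t/√(1 − t/2)`, `m = (2z)^{−1/2}`, `Λ = m⁻³` and
`u₃ = −m²(2t − t²/4) − (3/8)mΛ`, one has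
`(512u₃ − Λ² + 96mΛ)² = Λ(64m + Λ)³`, and consequently
`g₂(u₃)³ = 27 g₃(u₃)²` for the equal-mass `N_f = 3` Weierstrass
invariants, i.e. `u₃` is a singular point of the curve. -/
theorem stmt_5 (t z m Λ u3 : ℝ) (ht0 : 0 < t) (ht2 : t < 2)
    (hz : z = t / Real.sqrt (1 - t/2))
    (hm : m = 1 / Real.sqrt (2*z))
    (hΛ : Λ = 1 / m^3)
    (hu3 : u3 = -m^2 * (2*t - t^2/4) - (3/8)*m*Λ)
    (g2 g3 : ℝ → ℝ)
    (hg2 : ∀ v, g2 v = Λ^4/3072 - Λ*m^3 + (1/48)*Λ^2*(9*m^2 - 4*v) + (4/3)*v^2)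
    (hg3 : ∀ v, g3 v = (8/27)*v^3 + (5/144)*Λ^2*v^2
        - Λ*v*(Λ^3 + 768*m^3 + 288*Λ*m^2)/2304
        + Λ^2*(Λ^4 + 165888*m^4 - 4608*Λ*m^3 + 864*Λ^2*m^2)/884736) :
    (512*u3 - Λ^2 + 96*m*Λ)^2 = Λ*(64*m + Λ)^3 ∧
    g2 u3 ^ 3 = 27 * g3 u3 ^ 2 := by
  have h2 : (0:ℝ) < 1 - t/2 := by linarith
  set s := Real.sqrt (1 - t/2) with hsdef
  have hs0 : 0 < s := Real.sqrt_pos.mpr h2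
  have hs2 : s^2 = 1 - t/2 := Real.sq_sqrt h2.le
  have hz0 : 0 < z := by rw [hz]; positivity
  have hm0 : 0 < m := by rw [hm]; positivity
  have hm2 : m^2 = 1/(2*z) := by
    rw [hm, div_pow, one_pow, Real.sq_sqrt (by positivity)]
  have hm2' : 2*t*m^2 = s := by
    rw [hm2, hz]
    field_simp
  have hG : 4*t^2*m^4 = 1 - t/2 := by
    linear_combination (2*t*m^2 + s)*hm2' + hs2
  have hΛm : Λ * m^3 = 1 := by
    rw [hΛ]; field_simp
  have hkey : ((512*u3 - Λ^2 + 96*m*Λ)^2 - Λ*(64*m + Λ)^3) * (m^12 * t^8) = 0 := by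
    rw [hu3]
    linear_combination
      ((-256:ℝ)*Λ*m^11*t^10 + (2048:ℝ)*Λ*m^11*t^9 + (-3072:ℝ)*Λ*m^11*t^8
        + (-24576:ℝ)*m^12*t^10 + (196608:ℝ)*m^12*t^9 + (-262144:ℝ)*m^12*t^8
        + (-256:ℝ)*m^8*t^10 + (2048:ℝ)*m^8*t^9 + (-3072:ℝ)*m^8*t^8) * hΛm
      + ((4096:ℝ)*m^12*t^10 + (-65536:ℝ)*m^12*t^9 + (262144:ℝ)*m^12*t^8
        + (-512:ℝ)*m^8*t^9 + (3072:ℝ)*m^8*t^8) * hG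
  have hne : m^12 * t^8 ≠ 0 := by positivity
  have h1 : (512*u3 - Λ^2 + 96*m*Λ)^2 = Λ*(64*m + Λ)^3 := by
    have h := (mul_eq_zero.mp hkey).resolve_right hne
    linarith
  refine ⟨h1, ?_⟩
  rw [hg2 u3, hg3 u3]
  linear_combination
    ((-1:ℝ)/262144*u3^3*Λ^2 + (3:ℝ)/262144*u3^2*m^2*Λ^2 + (3:ℝ)/2097152*u3^2*m*Λ^3
      + (-3:ℝ)/262144*u3*m^4*Λ^2 + (-3:ℝ)/1048576*u3*m^3*Λ^3
      + (-3:ℝ)/16777216*u3*m^2*Λ^4 + (1:ℝ)/262144*m^6*Λ^2 + (3:ℝ)/2097152*m^5*Λ^3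
      + (3:ℝ)/16777216*m^4*Λ^4 + (1:ℝ)/134217728*m^3*Λ^5) * h1
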